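/- Let s be a sequence whose events have pairwise distinct (strictly increasing) timestamps, and let H(s) be the serial episode having one node per event of s, each node carrying a single episode event with that sequence event's label, and a proper edge from the node of e to the node of f whenever ts(e) < ts(f). Then for every episode G: s covers G if and only if G ⪯ H(s). -/

import Mathlib

/-- A sequence event: a unique id, a label (from alphabet encoded as `ℕ`),
and an integer time stamp. -/
structure SeqEvent where
  id : ℕ
  lab : ℕ
  ts : ℤ
deriving DecidableEq

/-- An event sequence: a finite collection of sequence events with distinct ids,
whose time stamps are monotone in the ids. -/
structure EventSeq where
  events : Finset SeqEvent
  id_inj : ∀ e ∈ events, ∀ f ∈ events, e.id = f.id → e = f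
  ts_mono : ∀ e ∈ events, ∀ f ∈ events, e.id ≤ f.id → e.ts ≤ f.ts

/-- An episode: a finite set of episode events (identified by ids in `ℕ`) with labels,
a finite set of graph nodes, a map from events to nodes (surjectivity and the DAG
property are recorded in `Episode.WellFormed`), and weak and proper edges. -/
structure Episode where
  events : Finset ℕ
  lab : ℕ → ℕ
  nodes : Finset ℕ
  node : ℕ → ℕ
  weak : ℕ → ℕ → Prop
  proper : ℕ → ℕ → Prop

namespace Episode

/-- An edge of the episode graph (weak or proper). -/
def edge (G : Episode) (a b : ℕ) : Prop := G.weak a b ∨ G.proper a b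

/-- `G.Desc m n` : `n` is a descendant of `m`, i.e. there is a directed path from `m` to `n`. -/
def Desc (G : Episode) (m n : ℕ) : Prop := Relation.TransGen G.edge m n

/-- `G.PDesc m n` : `n` is a proper descendant of `m`, i.e. some directed path
from `m` to `n` contains a proper edge. -/
def PDesc (G : Episode) (m n : ℕ) : Prop :=
  ∃ a b, Relation.ReflTransGen G.edge m a ∧ G.proper a b ∧ Relation.ReflTransGen G.edge b n

/-- Well-formedness of an episode: events map into the nodes, every node carries an
event, edges run between nodes, the weak and proper edges are disjoint, and the
graph is acyclic (a DAG). -/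
structure WellFormed (G : Episode) : Prop where
  node_mem : ∀ e ∈ G.events, G.node e ∈ G.nodes
  node_surj : ∀ n ∈ G.nodes, ∃ e ∈ G.events, G.node e = n
  weak_mem : ∀ a b, G.weak a b → a ∈ G.nodes ∧ b ∈ G.nodes
  proper_mem : ∀ a b, G.proper a b → a ∈ G.nodes ∧ b ∈ G.nodes
  weak_proper_disjoint : ∀ a b, G.weak a b → G.proper a b → False
  acyclic : ∀ n, ¬ G.Desc n n

/-- The transitive closure of an episode: add an edge from every node to each of its
descendants, proper if the descendant is a proper descendant, weak otherwise. -/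
def tcl (G : Episode) : Episode :=
  { G with
    proper := fun a b => G.PDesc a b
    weak := fun a b => G.Desc a b ∧ ¬ G.PDesc a b }

/-- An episode is transitively closed if it coincides with its transitive closure. -/
def TransClosed (G : Episode) : Prop :=
  (∀ a b, G.proper a b ↔ G.PDesc a b) ∧
  (∀ a b, G.weak a b ↔ (G.Desc a b ∧ ¬ G.PDesc a b))

end Episode

/-- `m` is a coverage mapping of episode `G` into sequence `s`: an injective map from
the episode events into the sequence events preserving labels, mapping events of one
node to a common time stamp, and respecting weak and proper edges. -/
def IsCoverMap (s : EventSeq) (G : Episode) (m : ℕ → SeqEvent) : Prop :=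
  (∀ e ∈ G.events, m e ∈ s.events) ∧
  Set.InjOn m ↑G.events ∧
  (∀ e ∈ G.events, (m e).lab = G.lab e) ∧
  (∀ e ∈ G.events, ∀ f ∈ G.events, G.node e = G.node f → (m e).ts = (m f).ts) ∧
  (∀ e ∈ G.events, ∀ f ∈ G.events, G.Desc (G.node f) (G.node e) → (m f).ts ≤ (m e).ts) ∧
  (∀ e ∈ G.events, ∀ f ∈ G.events, G.PDesc (G.node f) (G.node e) → (m f).ts < (m e).ts)

/-- A sequence `s` covers an episode `G`. -/
def Covers (s : EventSeq) (G : Episode) : Prop := ∃ m, IsCoverMap s G m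

/-- `G ⪯ H` : every sequence covering `H` also covers `G`. -/
def Subepisode (G H : Episode) : Prop := ∀ s : EventSeq, Covers s H → Covers s G

/-- `G ∼ H` : `G ⪯ H` and `H ⪯ G`. -/
def EpisodeSimilar (G H : Episode) : Prop := Subepisode G H ∧ Subepisode H G

/-- The window `s[i, j]`: the subsequence of events with time stamps in `[i, j]`. -/
def EventSeq.window (s : EventSeq) (i j : ℤ) : EventSeq where
  events := s.events.filter (fun e => i ≤ e.ts ∧ e.ts ≤ j)
  id_inj := fun e he f hf h =>
    s.id_inj e (Finset.mem_filter.mp he).1 f (Finset.mem_filter.mp hf).1 h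
  ts_mono := fun e he f hf h =>
    s.ts_mono e (Finset.mem_filter.mp he).1 f (Finset.mem_filter.mp hf).1 h

/-- The support `fr(G; s)` with window size `ρ`: the number of integers `t` such that
the window `s[t, t + ρ - 1]` covers `G` (as an extended natural number). -/
noncomputable def support (ρ : ℤ) (s : EventSeq) (G : Episode) : ℕ∞ :=
  {t : ℤ | Covers (s.window t (t + ρ - 1)) G}.encard

/-- `first(i)` : the smallest time stamp in the range of the instance. -/
noncomputable def instFirst (G : Episode) (m : ℕ → SeqEvent) : ℤ :=
  sInf ((fun e => (m e).ts) '' ↑G.events)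

/-- `last(i)` : the largest time stamp in the range of the instance. -/
noncomputable def instLast (G : Episode) (m : ℕ → SeqEvent) : ℤ :=
  sSup ((fun e => (m e).ts) '' ↑G.events)

/-- `m` is an instance of `G` in `s` (with window size `ρ`): a coverage mapping of `G`
into `s` such that no used sequence event can be replaced by an unused one with the same
label, the same time stamp and a smaller id, and whose span is less than `ρ`. -/
def IsInstance (ρ : ℤ) (s : EventSeq) (G : Episode) (m : ℕ → SeqEvent) : Prop :=
  IsCoverMap s G m ∧
  (∀ e ∈ G.events, ∀ f ∈ s.events, (∀ e' ∈ G.events, m e' ≠ f) →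
      f.lab = (m e).lab → f.ts = (m e).ts → ¬ f.id < (m e).id) ∧
  instLast G m - instFirst G m ≤ ρ - 1

/-!
The map `φ` itself covers `H(s)` in `s`, which gives `⇐`. Conversely, let `k` cover `H(s)` in
some `t`. Since the time stamps of `s` are distinct, two distinct events of `s` are joined by a
proper edge of `H(s)`, so `k ∘ φ⁻¹` embeds `s` into `t` preserving labels and the order of time stamps;
composing a cover of `G` in `s` with this embedding covers `G` in `t`.
-/

namespace Episode

variable {G : Episode} {τ : ℕ → ℤ}

theorem PDesc.of_proper {a b : ℕ} (h : G.proper a b) : G.PDesc a b :=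
  ⟨a, b, .refl, h, .refl⟩

theorem le_of_reflTransGen_edge (hweak : ∀ a b, G.weak a b → τ a ≤ τ b)
    (hproper : ∀ a b, G.proper a b → τ a < τ b) {a b : ℕ}
    (h : Relation.ReflTransGen G.edge a b) : τ a ≤ τ b := by
  induction h with
  | refl => exact le_rfl
  | tail _ hbc ih => exact ih.trans (hbc.elim (hweak _ _) (fun h => (hproper _ _ h).le))

theorem Desc.le_of_potential (hweak : ∀ a b, G.weak a b → τ a ≤ τ b)
    (hproper : ∀ a b, G.proper a b → τ a < τ b) {a b : ℕ} (h : G.Desc a b) : τ a ≤ τ b :=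
  le_of_reflTransGen_edge hweak hproper h.to_reflTransGen

theorem PDesc.lt_of_potential (hweak : ∀ a b, G.weak a b → τ a ≤ τ b)
    (hproper : ∀ a b, G.proper a b → τ a < τ b) {a b : ℕ} (h : G.PDesc a b) : τ a < τ b := by
  obtain ⟨c, d, hac, hcd, hdb⟩ := h
  exact (le_of_reflTransGen_edge hweak hproper hac).trans_lt
    ((hproper c d hcd).trans_le (le_of_reflTransGen_edge hweak hproper hdb))

end Episode

/-- A cover map can be checked against a time-stamp potential `τ` on the nodes. -/
theorem IsCoverMap.of_potential {s : EventSeq} {G : Episode} {m : ℕ → SeqEvent} (τ : ℕ → ℤ)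
    (hmem : ∀ e ∈ G.events, m e ∈ s.events) (hinj : Set.InjOn m ↑G.events)
    (hlab : ∀ e ∈ G.events, (m e).lab = G.lab e)
    (hts : ∀ e ∈ G.events, (m e).ts = τ (G.node e))
    (hweak : ∀ a b, G.weak a b → τ a ≤ τ b) (hproper : ∀ a b, G.proper a b → τ a < τ b) :
    IsCoverMap s G m := by
  refine ⟨hmem, hinj, hlab, fun e he f hf h => ?_, fun e he f hf h => ?_, fun e he f hf h => ?_⟩
  · rw [hts e he, hts f hf, h]
  · rw [hts e he, hts f hf]; exact h.le_of_potential hweak hproper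
  · rw [hts e he, hts f hf]; exact h.lt_of_potential hweak hproper

structure IsSeqEmbedding (s t : EventSeq) (g : SeqEvent → SeqEvent) : Prop where
  mapsTo : ∀ a ∈ s.events, g a ∈ t.events
  injOn : Set.InjOn g ↑s.events
  lab_eq : ∀ a ∈ s.events, (g a).lab = a.lab
  ts_lt : ∀ a ∈ s.events, ∀ b ∈ s.events, a.ts < b.ts → (g a).ts < (g b).ts
  ts_eq : ∀ a ∈ s.events, ∀ b ∈ s.events, a.ts = b.ts → (g a).ts = (g b).ts

theorem IsSeqEmbedding.ts_le {s t : EventSeq} {g : SeqEvent → SeqEvent}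
    (hg : IsSeqEmbedding s t g) {a b : SeqEvent} (ha : a ∈ s.events) (hb : b ∈ s.events)
    (h : a.ts ≤ b.ts) : (g a).ts ≤ (g b).ts :=
  h.lt_or_eq.elim (fun h => (hg.ts_lt a ha b hb h).le) (fun h => (hg.ts_eq a ha b hb h).le)

theorem IsCoverMap.comp {s t : EventSeq} {G : Episode} {m : ℕ → SeqEvent}
    {g : SeqEvent → SeqEvent} (hm : IsCoverMap s G m) (hg : IsSeqEmbedding s t g) :
    IsCoverMap t G (g ∘ m) := by
  obtain ⟨hmem, hinj, hlab, hnode, hdesc, hpdesc⟩ := hm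
  refine ⟨fun e he => hg.mapsTo _ (hmem e he), hg.injOn.comp hinj hmem,
    fun e he => (hg.lab_eq _ (hmem e he)).trans (hlab e he), fun e he f hf h => ?_,
    fun e he f hf h => ?_, fun e he f hf h => ?_⟩
  · exact hg.ts_eq _ (hmem e he) _ (hmem f hf) (hnode e he f hf h)
  · exact hg.ts_le (hmem f hf) (hmem e he) (hdesc e he f hf h)
  · exact hg.ts_lt _ (hmem f hf) _ (hmem e he) (hpdesc e he f hf h)

theorem Covers.of_seqEmbedding {s t : EventSeq} {G : Episode} {g : SeqEvent → SeqEvent}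
    (hs : Covers s G) (hg : IsSeqEmbedding s t g) : Covers t G :=
  let ⟨_, hm⟩ := hs
  ⟨_, hm.comp hg⟩

/-- `H` is the serial episode `H(s)`, with `φ` identifying its events with those of `s`. -/
structure IsSerialOf (H : Episode) (s : EventSeq) (φ : ℕ → SeqEvent) : Prop where
  mapsTo : ∀ e ∈ H.events, φ e ∈ s.events
  injOn : Set.InjOn φ ↑H.events
  surj : ∀ f ∈ s.events, ∃ e ∈ H.events, φ e = f
  lab_eq : ∀ e ∈ H.events, (φ e).lab = H.lab e
  node_eq : ∀ e ∈ H.events, H.node e = e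
  proper_iff : ∀ a b, H.proper a b ↔ (a ∈ H.events ∧ b ∈ H.events ∧ (φ a).ts < (φ b).ts)
  not_weak : ∀ a b, ¬ H.weak a b

namespace IsSerialOf

variable {H : Episode} {s : EventSeq} {φ : ℕ → SeqEvent}

theorem isCoverMap (hH : IsSerialOf H s φ) : IsCoverMap s H φ :=
  .of_potential (fun n => (φ n).ts) hH.mapsTo hH.injOn hH.lab_eq
    (fun e he => by rw [hH.node_eq e he]) (fun a b h => (hH.not_weak a b h).elim)
    (fun a b h => ((hH.proper_iff a b).mp h).2.2)

theorem isSeqEmbedding (hH : IsSerialOf H s φ)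
    (hdist : ∀ e ∈ s.events, ∀ f ∈ s.events, e.ts = f.ts → e = f)
    {t : EventSeq} {k : ℕ → SeqEvent} (hk : IsCoverMap t H k) :
    IsSeqEmbedding s t (k ∘ Function.invFunOn φ H.events) := by
  set ψ := Function.invFunOn φ H.events
  have hψ_mem : ∀ a ∈ s.events, ψ a ∈ H.events := fun a ha =>
    Function.invFunOn_mem (hH.surj a ha)
  have hφψ : ∀ a ∈ s.events, φ (ψ a) = a := fun a ha => Function.invFunOn_eq (hH.surj a ha)
  obtain ⟨hkmem, hkinj, hklab, -, -, hkpdesc⟩ := hk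
  refine ⟨fun a ha => hkmem _ (hψ_mem a ha), fun a ha b hb h => ?_, fun a ha => ?_,
    fun a ha b hb h => ?_, fun a ha b hb h => by rw [hdist a ha b hb h]⟩
  · rw [← hφψ a ha, ← hφψ b hb, hkinj (hψ_mem a ha) (hψ_mem b hb) h]
  · rw [Function.comp_apply, hklab _ (hψ_mem a ha), ← hH.lab_eq _ (hψ_mem a ha), hφψ a ha]
  · have hprop : H.proper (ψ a) (ψ b) :=
      (hH.proper_iff _ _).mpr ⟨hψ_mem a ha, hψ_mem b hb, by rwa [hφψ a ha, hφψ b hb]⟩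
    refine hkpdesc _ (hψ_mem b hb) _ (hψ_mem a ha) ?_
    rw [hH.node_eq _ (hψ_mem a ha), hH.node_eq _ (hψ_mem b hb)]
    exact .of_proper hprop

end IsSerialOf

theorem covers_iff_subepisode_serial_general (s : EventSeq)
    (hdist : ∀ e ∈ s.events, ∀ f ∈ s.events, e.ts = f.ts → e = f)
    (H : Episode) (φ : ℕ → SeqEvent)
    (hmaps : ∀ e ∈ H.events, φ e ∈ s.events)
    (hinj : Set.InjOn φ ↑H.events)
    (hsurj : ∀ f ∈ s.events, ∃ e ∈ H.events, φ e = f)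
    (hlab : ∀ e ∈ H.events, (φ e).lab = H.lab e)
    (hnode : ∀ e ∈ H.events, H.node e = e)
    (hproper : ∀ a b, H.proper a b ↔
      (a ∈ H.events ∧ b ∈ H.events ∧ (φ a).ts < (φ b).ts))
    (hweak : ∀ a b, ¬ H.weak a b)
    (G : Episode) :
    Covers s G ↔ Subepisode G H := by
  have hH : IsSerialOf H s φ := ⟨hmaps, hinj, hsurj, hlab, hnode, hproper, hweak⟩
  constructor
  · rintro hs t ⟨k, hk⟩
    exact hs.of_seqEmbedding (hH.isSeqEmbedding hdist hk)
  · exact fun hsub => hsub s ⟨φ, hH.isCoverMap⟩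

/-- let `s` be a sequence with pairwise distinct time stamps and let `H`
be the serial episode `H(s)` having one node per event of `s` (identified via the
bijection `φ`), each node carrying a single episode event with the corresponding label,
and a proper edge between two nodes exactly when the time stamp of the first event is
smaller. Then for every episode `G`: `s` covers `G` iff `G ⪯ H`. -/
theorem covers_iff_subepisode_serial (s : EventSeq)
    (hdist : ∀ e ∈ s.events, ∀ f ∈ s.events, e.ts = f.ts → e = f)
    (H : Episode) (φ : ℕ → SeqEvent)
    (hmaps : ∀ e ∈ H.events, φ e ∈ s.events)
    (hinj : Set.InjOn φ ↑H.events)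
    (hsurj : ∀ f ∈ s.events, ∃ e ∈ H.events, φ e = f)
    (hlab : ∀ e ∈ H.events, (φ e).lab = H.lab e)
    (hnodes : H.nodes = H.events)
    (hnode : ∀ e ∈ H.events, H.node e = e)
    (hproper : ∀ a b, H.proper a b ↔
      (a ∈ H.events ∧ b ∈ H.events ∧ (φ a).ts < (φ b).ts))
    (hweak : ∀ a b, ¬ H.weak a b)
    (G : Episode) (hG : G.WellFormed) :
    Covers s G ↔ Subepisode G H :=
  covers_iff_subepisode_serial_general s hdist H φ hmaps hinj hsurj hlab hnode hproper hweak G
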